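/- arXiv:0905.4612 — 9 statements merged into one kernel-verified Lean document; each statement's English description precedes it below -/
import Mathlib

section
/- In every meadow, (-x)⁻¹ = -(x⁻¹) for all x. -/
theorem meadow_neg_inv {R : Type*} [CommRing R] [Inv R] (hrefl : ∀ x : R, x⁻¹⁻¹ = x) (hril : ∀ x : R, x * (x * x⁻¹) = x) :
    ∀ x : R, (-x)⁻¹ = -(x⁻¹) := by
  intro x
  have h1 := hril (-x)
  have h2 := hril ((-x)⁻¹)
  have h3 := hril (x⁻¹)
  have h4 := hril x
  rw [hrefl] at h2 h3
  linear_combination ((x⁻¹)^2 - (-x)⁻¹ * x⁻¹) * h1 - h2 - h3 + (((-x)⁻¹)^2 - (-x)⁻¹ * x⁻¹) * h4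
end

section
/- In every meadow, (x·y)⁻¹ = x⁻¹·y⁻¹ for all x, y. -/
theorem meadow_mul_inv {R : Type*} [CommRing R] [Inv R] (hrefl : ∀ x : R, x⁻¹⁻¹ = x) (hril : ∀ x : R, x * (x * x⁻¹) = x) :
    ∀ x y : R, (x * y)⁻¹ = x⁻¹ * y⁻¹ := by
  intro x y
  have L : ∀ z : R, z * z⁻¹ * z = z := fun z => by linear_combination hril z
  have L2 : ∀ z : R, z⁻¹ * z * z⁻¹ = z⁻¹ := fun z => by
    have h := L z⁻¹
    rw [hrefl] at h
    linear_combination h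
  set s := x * y with hs
  set t := (x * y)⁻¹ with ht
  set u := x⁻¹ * y⁻¹ with hu
  have hsts : s * t * s = s := L s
  have htst : t * s * t = t := L2 s
  have hsus : s * u * s = s := by
    have hx := L x
    have hy := L y
    rw [hs, hu]
    linear_combination (y * y⁻¹ * y) * hx + x * hy
  have husu : u * s * u = u := by
    have hx := L2 x
    have hy := L2 y
    rw [hs, hu]
    linear_combination (y⁻¹ * y * y⁻¹) * hx + x⁻¹ * hy
  have hst_su : s * t = s * u := by
    have a1 : s * t = s * u * (s * t) := by linear_combination (-t) * hsus
    have a2 : s * u = s * t * (s * u) := by linear_combination (-u) * hsts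
    linear_combination a1 - a2
  linear_combination (-1 : R) * htst + husu + (t + u) * hst_su
end

section
/- In a meadow, the cancellation axiom (x ≠ 0 and x·y = x·z implies y = z) holds if and only if the Inverse Law (x ≠ 0 implies x·x⁻¹ = 1) holds. -/
theorem meadow_cancellation_iff_IL {R : Type*} [CommRing R] [Inv R] (hrefl : ∀ x : R, x⁻¹⁻¹ = x) (hril : ∀ x : R, x * (x * x⁻¹) = x) :
    (∀ x y z : R, x ≠ 0 → x * y = x * z → y = z) ↔
    (∀ x : R, x ≠ 0 → x * x⁻¹ = 1) := by
  constructor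
  · intro hc x hx
    apply hc x _ _ hx
    rw [mul_one]
    exact hril x
  · intro hil x y z hx h
    have h1 := hil x hx
    calc y = (x * x⁻¹) * y := by rw [h1, one_mul]
    _ = x⁻¹ * (x * y) := by ring
    _ = x⁻¹ * (x * z) := by rw [h]
    _ = (x * x⁻¹) * z := by ring
    _ = z := by rw [h1, one_mul]
end

section
/- In a meadow, the Inverse Law (x ≠ 0 implies x·x⁻¹ = 1) holds if and only if the meadow has no proper zero divisors (x·y = 0 implies x = 0 or y = 0). -/
theorem meadow_IL_iff_no_zero_divisors {R : Type*} [CommRing R] [Inv R] (hrefl : ∀ x : R, x⁻¹⁻¹ = x) (hril : ∀ x : R, x * (x * x⁻¹) = x) :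
    (∀ x : R, x ≠ 0 → x * x⁻¹ = 1) ↔
    (∀ x y : R, x * y = 0 → x = 0 ∨ y = 0) := by
  constructor
  · intro hIL x y hxy
    by_cases hx : x = 0
    · exact Or.inl hx
    · right
      have h1 := hIL x hx
      calc y = (x * x⁻¹) * y := by rw [h1, one_mul]
        _ = x⁻¹ * (x * y) := by ring
        _ = 0 := by rw [hxy, mul_zero]
  · intro hnzd x hx
    have h : x * (x * x⁻¹ - 1) = 0 := by
      have := hril x
      ring_nf
      ring_nf at this
      linear_combination this
    rcases hnzd _ _ h with h' | h'
    · exact absurd h' hx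
    · exact sub_eq_zero.mp h'
end

section
/- In a signed meadow, s(x²) = x·x⁻¹ for all x. -/
theorem signed_meadow_sign_sq {R : Type*} [CommRing R] [Inv R] (hrefl : ∀ x : R, x⁻¹⁻¹ = x) (hril : ∀ x : R, x * (x * x⁻¹) = x) (s : R → R) (hs1 : ∀ x : R, s (x * x⁻¹) = x * x⁻¹) (hs2 : ∀ x : R, s (1 - x * x⁻¹) = 1 - x * x⁻¹) (hs3 : s (-1) = -1) (hs4 : ∀ x : R, s x⁻¹ = s x) (hs5 : ∀ x y : R, s (x * y) = s x * s y) (hs6 : ∀ x y : R, (1 - (s x - s y) * (s x - s y)⁻¹) * (s (x + y) - s x) = 0) :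
    ∀ x : R, s (x ^ 2) = x * x⁻¹ := by
  intro x
  have h := hs1 x
  rw [hs5, hs4] at h
  rw [pow_two, hs5]
  exact h
end

section
/- In a signed meadow, (x·x⁻¹)·s(x) = s(x) for all x. -/
theorem signed_meadow_pseudo_unit_sign {R : Type*} [CommRing R] [Inv R] (hrefl : ∀ x : R, x⁻¹⁻¹ = x) (hril : ∀ x : R, x * (x * x⁻¹) = x) (s : R → R) (hs1 : ∀ x : R, s (x * x⁻¹) = x * x⁻¹) (hs2 : ∀ x : R, s (1 - x * x⁻¹) = 1 - x * x⁻¹) (hs3 : s (-1) = -1) (hs4 : ∀ x : R, s x⁻¹ = s x) (hs5 : ∀ x y : R, s (x * y) = s x * s y) (hs6 : ∀ x y : R, (1 - (s x - s y) * (s x - s y)⁻¹) * (s (x + y) - s x) = 0) :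
    ∀ x : R, (x * x⁻¹) * s x = s x := by
  intro x
  have h := hs5 x (x * x⁻¹)
  rw [hril, hs1] at h
  linear_combination -h
end

section
/- In a signed meadow, s(x)·(1 - s(x))·(1 + s(x)) = 0 for all x. -/
theorem signed_meadow_sign_cubic_eq {R : Type*} [CommRing R] [Inv R] (hrefl : ∀ x : R, x⁻¹⁻¹ = x) (hril : ∀ x : R, x * (x * x⁻¹) = x) (s : R → R) (hs1 : ∀ x : R, s (x * x⁻¹) = x * x⁻¹) (hs2 : ∀ x : R, s (1 - x * x⁻¹) = 1 - x * x⁻¹) (hs3 : s (-1) = -1) (hs4 : ∀ x : R, s x⁻¹ = s x) (hs5 : ∀ x y : R, s (x * y) = s x * s y) (hs6 : ∀ x y : R, (1 - (s x - s y) * (s x - s y)⁻¹) * (s (x + y) - s x) = 0) :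
    ∀ x : R, s x * (1 - s x) * (1 + s x) = 0 := by
  intro x
  -- s x * s x = x * x⁻¹
  have e2 : s x * s x = x * x⁻¹ := by
    have := hs5 x x⁻¹
    rw [hs4 x, hs1 x] at this
    exact this.symm
  -- x * x⁻¹ is idempotent
  have e3 : (x * x⁻¹) * (x * x⁻¹) = x * x⁻¹ := by
    calc (x * x⁻¹) * (x * x⁻¹) = (x * (x * x⁻¹)) * x⁻¹ := by ring
    _ = x * x⁻¹ := by rw [hril]
  have e1 : s x * (s x * (s x)⁻¹) = s x := hril (s x)
  linear_combination (x * x⁻¹ - 1) * e1 + (-(s x) + (s x)⁻¹ - (s x)⁻¹ * (x * x⁻¹)) * e2 + (-(s x)⁻¹) * e3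
end

section
/- In a signed cancellation meadow, for every x, s(x) = 0 or s(x) = 1 or s(x) = -1. -/
theorem signed_cancellation_meadow_sign_trichotomy {R : Type*} [CommRing R] [Inv R] (hrefl : ∀ x : R, x⁻¹⁻¹ = x) (hril : ∀ x : R, x * (x * x⁻¹) = x) (s : R → R) (hs1 : ∀ x : R, s (x * x⁻¹) = x * x⁻¹) (hs2 : ∀ x : R, s (1 - x * x⁻¹) = 1 - x * x⁻¹) (hs3 : s (-1) = -1) (hs4 : ∀ x : R, s x⁻¹ = s x) (hs5 : ∀ x y : R, s (x * y) = s x * s y) (hs6 : ∀ x y : R, (1 - (s x - s y) * (s x - s y)⁻¹) * (s (x + y) - s x) = 0) (hIL : ∀ x : R, x ≠ 0 → x * x⁻¹ = 1) :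
    ∀ x : R, s x = 0 ∨ s x = 1 ∨ s x = -1 := by
  intro x
  by_cases hx : x = 0
  · left
    have := hs1 0
    simpa [hx] using this
  · have h10 : (1 : R) ≠ 0 := by
      intro h
      apply hx
      calc x = x * 1 := (mul_one x).symm
        _ = 0 := by rw [h, mul_zero]
    have h1inv : (1 : R)⁻¹ = 1 := by
      have := hIL 1 h10
      simpa using this
    have hs1' : s 1 = 1 := by
      have := hs1 1
      simpa [h1inv] using this
    have hxinv : x * x⁻¹ = 1 := hIL x hx
    have hsq : s x * s x = 1 := by
      have h := hs5 x x⁻¹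
      rw [hxinv, hs1', hs4] at h
      exact h.symm
    by_cases h1 : s x - 1 = 0
    · right; left; linear_combination h1
    · right; right
      have hinv : (s x - 1) * (s x - 1)⁻¹ = 1 := hIL _ h1
      have hprod : (s x - 1) * (s x + 1) = 0 := by ring_nf; linear_combination hsq
      have : (s x - 1)⁻¹ * ((s x - 1) * (s x + 1)) = 0 := by rw [hprod, mul_zero]
      rw [← mul_assoc, mul_comm ((s x - 1)⁻¹), hinv, one_mul] at this
      linear_combination this
end

section
/- The rationals ℚ with zero-totalized inverse and the standard sign function (sign(x) = -1 if x < 0, 0 if x = 0, 1 if x > 0) satisfy all the axioms of signed meadows, including the axiom (1 - (s(x)-s(y))·(s(x)-s(y))⁻¹)·(s(x+y) - s(x)) = 0. -/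
/-! In a linearly ordered field each axiom is a case split on signs. In the last one the first factor
is `1` when `s x = s y` and `0` otherwise, and when `x` and `y` have the same sign so does `x + y`. -/

structure IsSignedMeadow (R : Type*) [CommRing R] [Inv R] (s : R → R) : Prop where
  inv_inv (x : R) : x⁻¹⁻¹ = x
  mul_mul_inv_self (x : R) : x * (x * x⁻¹) = x
  sign_mul_inv_self (x : R) : s (x * x⁻¹) = x * x⁻¹
  sign_one_sub_mul_inv_self (x : R) : s (1 - x * x⁻¹) = 1 - x * x⁻¹
  sign_neg_one : s (-1) = -1
  sign_inv (x : R) : s x⁻¹ = s x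
  sign_mul (x y : R) : s (x * y) = s x * s y
  sign_add (x y : R) : (1 - (s x - s y) * (s x - s y)⁻¹) * (s (x + y) - s x) = 0

theorem sign_add_of_sign_eq {α : Type*} [AddCommGroup α] [LinearOrder α] [IsOrderedAddMonoid α]
    {x y : α} (h : SignType.sign x = SignType.sign y) : SignType.sign (x + y) = SignType.sign x := by
  rcases lt_trichotomy x 0 with hx | rfl | hx
  · rw [sign_neg hx, eq_comm, sign_eq_neg_one_iff] at h
    rw [sign_neg hx, sign_neg (add_neg hx h)]
  · rw [sign_zero, eq_comm, sign_eq_zero_iff] at h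
    simp [h]
  · rw [sign_pos hx, eq_comm, sign_eq_one_iff] at h
    rw [sign_pos hx, sign_pos (add_pos hx h)]

theorem SignType.cast_injective {α : Type*} [Ring α] [CharZero α] :
    Function.Injective ((↑) : SignType → α) := by
  intro a b
  cases a <;> cases b <;> norm_num

section LinearOrderedField

variable {K : Type*} [Field K] [LinearOrder K] [IsStrictOrderedRing K]

theorem sign_inv (x : K) : SignType.sign x⁻¹ = SignType.sign x := by
  rcases lt_trichotomy x 0 with hx | rfl | hx
  · rw [sign_neg hx, sign_neg (inv_lt_zero.2 hx)]
  · rw [inv_zero]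
  · rw [sign_pos hx, sign_pos (inv_pos.2 hx)]

theorem isSignedMeadow_sign : IsSignedMeadow K (fun x => (SignType.sign x : K)) where
  inv_inv := inv_inv
  mul_mul_inv_self x := by rw [← mul_assoc, mul_self_mul_inv]
  sign_mul_inv_self x := by rcases eq_or_ne x 0 with rfl | hx <;> simp [*]
  sign_one_sub_mul_inv_self x := by rcases eq_or_ne x 0 with rfl | hx <;> simp [*]
  sign_neg_one := by simp
  sign_inv x := congrArg _ (sign_inv x)
  sign_mul x y := by rw [sign_mul, SignType.coe_mul]
  sign_add x y := by
    rcases eq_or_ne (SignType.sign x : K) (SignType.sign y) with h | h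
    · rw [sign_add_of_sign_eq (SignType.cast_injective h), sub_self, mul_zero]
    · rw [mul_inv_cancel₀ (sub_ne_zero.2 h), sub_self, zero_mul]

end LinearOrderedField

theorem rat_signed_meadow (s : ℚ → ℚ) (hs : s = fun x => (SignType.sign x : ℚ)) :
    (∀ x : ℚ, x⁻¹⁻¹ = x) ∧ (∀ x : ℚ, x * (x * x⁻¹) = x) ∧
    (∀ x : ℚ, s (x * x⁻¹) = x * x⁻¹) ∧
    (∀ x : ℚ, s (1 - x * x⁻¹) = 1 - x * x⁻¹) ∧
    (s (-1) = -1) ∧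
    (∀ x : ℚ, s x⁻¹ = s x) ∧
    (∀ x y : ℚ, s (x * y) = s x * s y) ∧
    (∀ x y : ℚ, (1 - (s x - s y) * (s x - s y)⁻¹) * (s (x + y) - s x) = 0) := by
  subst hs
  have h := isSignedMeadow_sign (K := ℚ)
  exact ⟨h.inv_inv, h.mul_mul_inv_self, h.sign_mul_inv_self, h.sign_one_sub_mul_inv_self,
    h.sign_neg_one, h.sign_inv, h.sign_mul, h.sign_add⟩
end
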